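/- If a graph G admits an H-factorization, then for every positive integer k the graph G[k] admits an H[k]-factorization. In particular, if G has a decomposition into spanning subgraphs each isomorphic to a spanning subgraph H, then G[k] has a decomposition into spanning subgraphs each isomorphic to H[k]. -/

import Mathlib

open SimpleGraph

/-- `F` is a decomposition of the graph `G` into edge-disjoint subgraphs. -/
def IsDecompositionF {V : Type*} {n : ℕ} (G : SimpleGraph V) (F : Fin n → SimpleGraph V) : Prop :=
  (∀ i, F i ≤ G) ∧ (∀ i j, i ≠ j → F i ⊓ F j = ⊥) ∧ (⨆ i, F i) = G

/-- `H` is a `C_k`-factor of `G`: a spanning 2-regular subgraph all of whose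
connected components have `k` vertices (hence are `k`-cycles). -/
def IsCnFactor {V : Type*} (G H : SimpleGraph V) (k : ℕ) : Prop :=
  H ≤ G ∧ (∀ v, (H.neighborSet v).ncard = 2) ∧
    ∀ v, (H.connectedComponentMk v).supp.ncard = k

/-- `H` is a perfect matching (1-factor) of `G`. -/
def IsPM {V : Type*} (G H : SimpleGraph V) : Prop :=
  H ≤ G ∧ ∀ v, (H.neighborSet v).ncard = 1

/-- The lexicographic blow-up `C_m[4]`: the Cayley graph on `ZMod 4 × ZMod m`
with connection set `ZMod 4 × {1, -1}`. -/
def Cm4 (m : ℕ) : SimpleGraph (ZMod 4 × ZMod m) :=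
  SimpleGraph.fromRel (fun u v => v.2 - u.2 = 1)

/-- The blow-up `G[k]`: replace every vertex by `k` independent vertices. -/
def blowup {V : Type*} (G : SimpleGraph V) (k : ℕ) : SimpleGraph (V × Fin k) where
  Adj u v := G.Adj u.1 v.1
  symm := ⟨fun _ _ h => G.adj_symm h⟩
  loopless := ⟨fun u h => G.irrefl (v := u.1) h⟩

section Blowup

variable {V : Type*} (k : ℕ)

@[simp]
theorem blowup_adj (G : SimpleGraph V) (u v : V × Fin k) :
    (blowup G k).Adj u v ↔ G.Adj u.1 v.1 :=
  Iff.rfl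

theorem blowup_mono {G G' : SimpleGraph V} (h : G ≤ G') : blowup G k ≤ blowup G' k :=
  fun _ _ huv => h huv

@[simp]
theorem blowup_bot : blowup (⊥ : SimpleGraph V) k = ⊥ := by
  ext u v
  simp

@[simp]
theorem blowup_inf (G G' : SimpleGraph V) : blowup (G ⊓ G') k = blowup G k ⊓ blowup G' k := by
  ext u v
  simp

@[simp]
theorem blowup_iSup {ι : Type*} (F : ι → SimpleGraph V) :
    blowup (⨆ i, F i) k = ⨆ i, blowup (F i) k := by
  ext u v
  simp

def SimpleGraph.Iso.blowup {W : Type*} {G : SimpleGraph V} {H : SimpleGraph W} (e : G ≃g H) :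
    _root_.blowup G k ≃g _root_.blowup H k where
  toEquiv := e.toEquiv.prodCongr (Equiv.refl (Fin k))
  map_rel_iff' := e.map_adj_iff

theorem IsDecompositionF.blowup {n : ℕ} {G : SimpleGraph V} {F : Fin n → SimpleGraph V}
    (hF : IsDecompositionF G F) :
    IsDecompositionF (_root_.blowup G k) fun i => _root_.blowup (F i) k := by
  obtain ⟨hle, hdisj, hsup⟩ := hF
  refine ⟨fun i => blowup_mono k (hle i), fun i j hij => ?_, ?_⟩
  · rw [← blowup_inf, hdisj i j hij, blowup_bot]
  · rw [← blowup_iSup, hsup]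

end Blowup

theorem stmt_9_general {V : Type*} (G H : SimpleGraph V) (k : ℕ)
    (n : ℕ) (F : Fin n → SimpleGraph V)
    (hF : IsDecompositionF G F) (hiso : ∀ i, Nonempty (F i ≃g H)) :
    ∃ F' : Fin n → SimpleGraph (V × Fin k),
      IsDecompositionF (blowup G k) F' ∧ ∀ i, Nonempty (F' i ≃g blowup H k) :=
  ⟨fun i => blowup (F i) k, hF.blowup k, fun i => (hiso i).map (Iso.blowup k)⟩

/-- If `G` has an `H`-factorization, then `G[k]` has an `H[k]`-factorization. -/
theorem stmt_9 {V : Type*} (G H : SimpleGraph V) (k : ℕ) (hk : 0 < k)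
    (n : ℕ) (F : Fin n → SimpleGraph V)
    (hF : IsDecompositionF G F) (hiso : ∀ i, Nonempty (F i ≃g H)) :
    ∃ F' : Fin n → SimpleGraph (V × Fin k),
      IsDecompositionF (blowup G k) F' ∧ ∀ i, Nonempty (F' i ≃g blowup H k) :=
  stmt_9_general G H k n F hF hiso
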